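/- For every nonnegative integer t, the rational number (6 + 2t)/(9 + 6t) has odd greedy expansion of length 2 with first denominator 3; conversely, every rational number whose odd greedy expansion has length 2 and begins with denominator 3 is of this form. -/

import Mathlib

/-! Greedy step 3 means exactly `1/3 ≤ q < 1`, and a unit fraction `1/x` with `x` odd is its own
greedy step, so the expansions `3, x₂` of length two are those with `q = 1/3 + 1/x₂`, `x₂` odd and
`q < 1`, i.e. `x₂ = 2t + 3`; then `1/3 + 1/(2t+3) = (6 + 2t)/(9 + 6t)`. -/

/-- `a` is the denominator chosen by the odd greedy algorithm for remainder `q`. -/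
def IsOddGreedyStep (q : ℚ) (a : ℕ) : Prop :=
  Odd a ∧ ((a = 1 ∧ 1 ≤ q) ∨ (3 ≤ a ∧ (1 : ℚ) / a ≤ q ∧ q < 1 / ((a : ℚ) - 2)))

/-- `x 0, …, x (m-1)` are the denominators of the odd greedy expansion of `q`. -/
def IsOddGreedyExpansion (m : ℕ) (x : ℕ → ℕ) (q : ℚ) : Prop :=
  q = ∑ i ∈ Finset.range m, (1 : ℚ) / (x i) ∧
    ∀ i < m, IsOddGreedyStep (q - ∑ j ∈ Finset.range i, (1 : ℚ) / (x j)) (x i)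

theorem isOddGreedyExpansion_two_iff (x : ℕ → ℕ) (q : ℚ) :
    IsOddGreedyExpansion 2 x q ↔
      q = 1 / x 0 + 1 / x 1 ∧ IsOddGreedyStep q (x 0) ∧ IsOddGreedyStep (q - 1 / x 0) (x 1) := by
  simp [IsOddGreedyExpansion, Finset.sum_range_succ, Nat.le_one_iff_eq_zero_or_eq_one, or_imp,
    forall_and]

theorem isOddGreedyStep_three_iff (q : ℚ) : IsOddGreedyStep q 3 ↔ 1 / 3 ≤ q ∧ q < 1 := by
  norm_num [IsOddGreedyStep]

theorem isOddGreedyStep_one_div {a : ℕ} (ha : Odd a) : IsOddGreedyStep (1 / a) a := by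
  refine ⟨ha, ?_⟩
  obtain ⟨k, rfl⟩ := ha
  rcases k.eq_zero_or_pos with rfl | hk
  · simp
  · right
    refine ⟨by omega, le_rfl, ?_⟩
    have hk : (1 : ℚ) ≤ k := by exact_mod_cast hk
    push_cast
    rw [one_div_lt_one_div (by positivity) (by linarith)]
    linarith

theorem odd_and_three_le_iff {x : ℕ} : Odd x ∧ 3 ≤ x ↔ ∃ t, x = 2 * t + 3 := by
  constructor
  · rintro ⟨⟨k, rfl⟩, hx⟩
    exact ⟨k - 1, by omega⟩
  · rintro ⟨t, rfl⟩
    exact ⟨⟨t + 1, by ring⟩, by omega⟩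

theorem one_div_three_add_one_div_two_mul_add_three (t : ℕ) :
    1 / 3 + 1 / ((2 * t + 3 : ℕ) : ℚ) = (6 + 2 * (t : ℚ)) / (9 + 6 * t) := by
  field_simp
  push_cast
  ring

theorem isOddGreedyExpansion_two_three_iff (x₂ : ℕ) (q : ℚ) :
    IsOddGreedyExpansion 2 (fun i => if i = 0 then 3 else x₂) q ↔
      q = 1 / 3 + 1 / x₂ ∧ Odd x₂ ∧ 3 ≤ x₂ := by
  simp only [isOddGreedyExpansion_two_iff, isOddGreedyStep_three_iff, if_pos, one_ne_zero,
    if_false, Nat.cast_ofNat]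
  constructor
  · rintro ⟨rfl, ⟨-, hq⟩, hodd, ⟨rfl, -⟩ | ⟨hx₂, -⟩⟩
    · norm_num at hq
    · exact ⟨rfl, hodd, hx₂⟩
  · rintro ⟨rfl, hodd, hx₂⟩
    have hle : (1 : ℚ) / x₂ ≤ 1 / 3 := by
      gcongr; exact_mod_cast hx₂
    refine ⟨rfl, ⟨by linarith [show (0 : ℚ) ≤ 1 / x₂ by positivity], by linarith⟩, ?_⟩
    simpa using isOddGreedyStep_one_div hodd

/-- a rational `q` has odd greedy expansion of length `2` with first
denominator `3` iff `q = (6 + 2t)/(9 + 6t)` for some nonnegative integer `t`. -/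
theorem stmt_10 (q : ℚ) :
    (∃ x₂ : ℕ, IsOddGreedyExpansion 2 (fun i => if i = 0 then 3 else x₂) q) ↔
      ∃ t : ℕ, q = (6 + 2 * (t : ℚ)) / (9 + 6 * t) := by
  simp only [isOddGreedyExpansion_two_three_iff]
  constructor
  · rintro ⟨x₂, rfl, hx₂⟩
    obtain ⟨t, rfl⟩ := odd_and_three_le_iff.mp hx₂
    exact ⟨t, one_div_three_add_one_div_two_mul_add_three t⟩
  · rintro ⟨t, rfl⟩
    exact ⟨2 * t + 3, (one_div_three_add_one_div_two_mul_add_three t).symm,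
      odd_and_three_le_iff.mpr ⟨t, rfl⟩⟩
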